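/- The code C = {011, 022, 033, 044, 105, 206, 307, 408, 550, 660, 770, 880} ⊆ {0,...,8}^3 is a 2-TA code: for every X ⊆ C with |X| ≤ 2 and every x ∈ desc(X), every codeword z ∈ C minimizing Hamming distance to x over C lies in X. -/

import Mathlib

/-!
If every codeword agrees with all other codewords in at most one coordinate `k`, then for
`x ∈ desc {a, b}` and a codeword `z ∉ {a, b}` the word `x` can agree with `z` at most in `k`,
so `d(x, z) ≥ n - 1`. On the other hand every coordinate of `x` is copied from `a` or `b`, so
`d(x, a) + d(x, b) ≤ n`, and one of `a`, `b` is strictly closer to `x` than `z` once `n ≥ 3`.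
The example code has this property, the shared coordinate of a codeword being its zero entry.
-/

def desc {Q : Type*} {ℓ : ℕ} (X : Set (Fin ℓ → Q)) : Set (Fin ℓ → Q) :=
  {d | ∀ i, ∃ x ∈ X, d i = x i}

def exampleCode : Set (Fin 3 → Fin 9) :=
  {![0,1,1], ![0,2,2], ![0,3,3], ![0,4,4], ![1,0,5], ![2,0,6],
   ![3,0,7], ![4,0,8], ![5,5,0], ![6,6,0], ![7,7,0], ![8,8,0]}

section

open Finset

variable {n : ℕ} {Q : Type*}

def IsTraceabilityCode [DecidableEq Q] (t : ℕ) (C : Set (Fin n → Q)) : Prop :=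
  ∀ X ⊆ C, X.Finite → X.ncard ≤ t → ∀ x ∈ desc X, ∀ z ∈ C,
    (∀ c ∈ C, hammingDist x z ≤ hammingDist x c) → z ∈ X

def SharesAtMostOneCoord (C : Set (Fin n → Q)) : Prop :=
  ∀ z ∈ C, ∃ k, ∀ c ∈ C, c ≠ z → ∀ i, c i = z i → i = k

theorem mem_desc_pair_iff {a b x : Fin n → Q} :
    x ∈ desc {a, b} ↔ ∀ i, x i = a i ∨ x i = b i := by
  simp [desc]

theorem Set.exists_eq_pair_of_ncard_le_two {α : Type*} {X : Set α} (hfin : X.Finite)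
    (hcard : X.ncard ≤ 2) (hne : X.Nonempty) : ∃ a b, X = {a, b} := by
  interval_cases h : X.ncard
  · exact absurd ((Set.ncard_eq_zero hfin).1 h) hne.ne_empty
  · obtain ⟨a, rfl⟩ := Set.ncard_eq_one.1 h
    exact ⟨a, a, by simp⟩
  · obtain ⟨a, b, -, rfl⟩ := Set.ncard_eq_two.1 h
    exact ⟨a, b, rfl⟩

variable [DecidableEq Q]

theorem hammingDist_add_hammingDist_le {a b x : Fin n → Q} (hx : ∀ i, x i = a i ∨ x i = b i) :
    hammingDist x a + hammingDist x b ≤ n := by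
  have hdisj : Disjoint (univ.filter fun i => x i ≠ a i) (univ.filter fun i => x i ≠ b i) :=
    disjoint_filter.2 fun i _ ha hb => (hx i).elim ha hb
  calc hammingDist x a + hammingDist x b
      = #((univ.filter fun i => x i ≠ a i) ∪ univ.filter fun i => x i ≠ b i) :=
        (card_union_of_disjoint hdisj).symm
    _ ≤ n := (card_le_univ _).trans_eq (Fintype.card_fin n)

theorem SharesAtMostOneCoord.sub_one_le_hammingDist {C : Set (Fin n → Q)}
    (hC : SharesAtMostOneCoord C) {a b x z : Fin n → Q} (ha : a ∈ C) (hb : b ∈ C)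
    (hz : z ∈ C) (haz : a ≠ z) (hbz : b ≠ z)
    (hx : ∀ i, x i = a i ∨ x i = b i) : n - 1 ≤ hammingDist x z := by
  obtain ⟨k, hk⟩ := hC z hz
  have hagree : ({i | x i = z i} : Finset (Fin n)) ⊆ {k} := by
    intro i hi
    simp only [mem_filter, mem_univ, true_and] at hi
    rcases hx i with hxi | hxi
    · exact mem_singleton.2 (hk a ha haz i (hxi ▸ hi))
    · exact mem_singleton.2 (hk b hb hbz i (hxi ▸ hi))
  have hsplit := card_filter_add_card_filter_not (s := univ) (fun i => x i = z i)
  have hle := card_le_card hagree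
  simp only [card_univ, Fintype.card_fin, card_singleton] at hsplit hle
  simp only [hammingDist, ne_eq]
  omega

theorem SharesAtMostOneCoord.isTraceabilityCode_two {C : Set (Fin n → Q)} (hn : 3 ≤ n)
    (hC : SharesAtMostOneCoord C) : IsTraceabilityCode 2 C := by
  intro X hXC hfin hcard x hx z hz hmin
  have hne : X.Nonempty := by
    obtain ⟨w, hw, -⟩ := hx ⟨0, by omega⟩
    exact ⟨w, hw⟩
  obtain ⟨a, b, rfl⟩ := Set.exists_eq_pair_of_ncard_le_two hfin hcard hne
  have ha := hXC (Set.mem_insert a {b})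
  have hb := hXC (Set.mem_insert_of_mem a rfl)
  rw [mem_desc_pair_iff] at hx
  by_contra hzab
  simp only [Set.mem_insert_iff, Set.mem_singleton_iff, not_or] at hzab
  have hfar := hC.sub_one_le_hammingDist ha hb hz (Ne.symm hzab.1) (Ne.symm hzab.2) hx
  have hsum := hammingDist_add_hammingDist_le hx
  have hza := hmin a ha
  have hzb := hmin b hb
  omega

end

theorem exampleCode_sharesAtMostOneCoord : SharesAtMostOneCoord exampleCode := by
  have hfin : exampleCode = ↑({![0,1,1], ![0,2,2], ![0,3,3], ![0,4,4], ![1,0,5], ![2,0,6],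
      ![3,0,7], ![4,0,8], ![5,5,0], ![6,6,0], ![7,7,0], ![8,8,0]} : Finset (Fin 3 → Fin 9)) := by
    simp [exampleCode]
  rw [SharesAtMostOneCoord, hfin]
  simp only [Finset.mem_coe]
  -- `k` is the unique coordinate where `z` vanishes: distinct codewords only agree on a shared `0`.
  decide +kernel

theorem exampleCode_is_2TA :
    ∀ X ⊆ exampleCode, X.Finite → X.ncard ≤ 2 → ∀ x ∈ desc X,
      ∀ z ∈ exampleCode,
        (∀ c ∈ exampleCode, hammingDist x z ≤ hammingDist x c) → z ∈ X :=
  exampleCode_sharesAtMostOneCoord.isTraceabilityCode_two le_rfl
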